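/- Let M be a metrically convex metric space (with at least two points) with a distinguished base point 0. Then there exists a linear map T : c₀ → Lip₀(M) such that ‖T a‖ = ‖a‖_∞ for every a ∈ c₀, and for every nonzero a ∈ c₀ one has inf{‖T a − g‖ : g ∈ SNA(M)} > 0; in particular, (Lip₀(M) \ closure(SNA(M))) ∪ {0} contains an isometric copy of c₀. -/

import Mathlib

open Filter Set
open scoped ZeroAtInfty ENNReal NNReal

/-- The optimal Lipschitz constant (Lipschitz norm) of `f : M → ℝ`. -/
noncomputable def lipNorm {M : Type*} [MetricSpace M] (f : M → ℝ) : ℝ :=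
  sSup {r : ℝ | ∃ p q : M, p ≠ q ∧ r = |f p - f q| / dist p q}

/-- `f` belongs to `Lip₀(M)`: it is Lipschitz and vanishes at the base point. -/
def MemLip0 {M : Type*} [MetricSpace M] (base : M) (f : M → ℝ) : Prop :=
  f base = 0 ∧ ∃ K : ℝ≥0, LipschitzWith K f

/-- `f` strongly attains its (Lipschitz) norm. -/
def StronglyAttains {M : Type*} [MetricSpace M] (f : M → ℝ) : Prop :=
  ∃ p q : M, p ≠ q ∧ |f p - f q| = lipNorm f * dist p q

/-- `f` attains its pointwise norm. -/
def PointwiseAttains {M : Type*} [MetricSpace M] (f : M → ℝ) : Prop :=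
  ∃ p : M, sSup {r : ℝ | ∃ q : M, q ≠ p ∧ r = |f p - f q| / dist p q} = lipNorm f

/-- `M` is metrically convex: any two distinct points are joined by an isometric copy of
the interval `[0, dist x y]`. -/
def MetricallyConvex (M : Type*) [MetricSpace M] : Prop :=
  ∀ x y : M, x ≠ y → ∃ γ : ℝ → M, γ 0 = x ∧ γ (dist x y) = y ∧
    ∀ s ∈ Set.Icc 0 (dist x y), ∀ t ∈ Set.Icc 0 (dist x y), dist (γ s) (γ t) = |s - t|

/-!
Take a dense open `U ⊆ ℝ` of measure `< 1/2` and let `w(t)` be the measure of `(0, 1/2) \ U`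
below `t`. Then `w` is `1`-Lipschitz, constant on a subinterval of every interval, and has slopes
arbitrarily close to `1` at a Lebesgue density point of `(0, 1/2) \ U`; folded at `1/2` it gives a
bump `φ` on `[0, 1]`. With `D = d(0, y) > 0`, put `F_a = ∑ₙ aₙ φₙ`, where `φₙ` is `φ` rescaled
onto `(D/2ⁿ⁺¹, D/2ⁿ)`, and `T a = F_a ∘ d(·, 0)`. Along a geodesic from `0` to `y` the slopes of
`T a` approach `‖a‖`, so `‖T a‖ = ‖a‖`. If `g` attains its norm at `p ≠ q`, then `g` has slope
`‖g‖` all along a geodesic from `p` to `q`, while `T a`, being injective on no interval of the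
distance scale, takes equal values at two points of that geodesic (intermediate value theorem).
Hence `‖T a - g‖ ≥ ‖g‖ ≥ ‖a‖ - ‖T a - g‖`.
-/

open MeasureTheory Metric Topology

def NowhereInjOn (g : ℝ → ℝ) (S : Set ℝ) : Prop :=
  ∀ a b, a < b → Icc a b ⊆ S → ¬ InjOn g (Icc a b)

lemma NowhereInjOn.comp_left {g : ℝ → ℝ} {S : Set ℝ} (hg : NowhereInjOn g S) (k : ℝ → ℝ) :
    NowhereInjOn (k ∘ g) S :=
  fun a b hab hS hinj => hg a b hab hS hinj.of_comp

lemma NowhereInjOn.comp {g f : ℝ → ℝ} {S T : Set ℝ} (hg : NowhereInjOn g T)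
    (hf : ContinuousOn f S) (hST : MapsTo f S T) : NowhereInjOn (g ∘ f) S := by
  intro a b hab hS hinj
  have hfab : f a ≠ f b := fun h =>
    hab.ne (hinj.of_comp (left_mem_Icc.2 hab.le) (right_mem_Icc.2 hab.le) h)
  have hIVT : uIcc (f a) (f b) ⊆ f '' Icc a b := by
    rw [← uIcc_of_le hab.le] at hS ⊢
    exact intermediate_value_uIcc (hf.mono hS)
  exact hg _ _ (inf_lt_sup.2 hfab) (hIVT.trans ((hST.mono_left hS).image_subset))
    (hinj.image_of_comp.mono hIVT)

lemma exists_isOpen_dense_volume_lt {ε : ℝ≥0∞} (hε : ε ≠ 0) :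
    ∃ U : Set ℝ, IsOpen U ∧ Dense U ∧ volume U < ε := by
  obtain ⟨U, hQU, hU, hUε⟩ := (range ((↑) : ℚ → ℝ)).exists_isOpen_lt_of_lt ε
    (by rw [(countable_range _).measure_zero volume]; exact pos_iff_ne_zero.2 hε)
  exact ⟨U, hU, Rat.denseRange_cast.mono hQU, hUε⟩

noncomputable def complCDF (U : Set ℝ) (t : ℝ) : ℝ := volume.real (Ioo 0 (1 / 2) \ U ∩ Iic t)

section complCDF

variable {U : Set ℝ}

lemma complCDF_eq_zero {t : ℝ} (ht : t ≤ 0) : complCDF U t = 0 := by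
  have : Ioo 0 (1 / 2) \ U ∩ Iic t = ∅ :=
    eq_empty_of_forall_notMem fun x hx => (hx.1.1.1.trans_le (hx.2.trans ht)).false
  rw [complCDF, this, measureReal_empty]

lemma complCDF_sub (hU : IsOpen U) {s t : ℝ} (hst : s ≤ t) :
    complCDF U t - complCDF U s = volume.real (Ioo 0 (1 / 2) \ U ∩ Ioc s t) := by
  have hfin (I : Set ℝ) : volume (Ioo 0 (1 / 2) \ U ∩ I) ≠ ∞ :=
    measure_ne_top_of_subset (inter_subset_left.trans sdiff_subset) measure_Ioo_lt_top.ne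
  rw [complCDF, complCDF, ← Iic_union_Ioc_eq_Iic hst, inter_union_distrib_left,
    measureReal_union (((Iic_disjoint_Ioc le_rfl).inter_left' _).inter_right' _)
      ((measurableSet_Ioo.diff hU.measurableSet).inter measurableSet_Ioc) (hfin _) (hfin _),
    add_sub_cancel_left]

lemma complCDF_sub_mem_Icc (hU : IsOpen U) {s t : ℝ} (hst : s ≤ t) :
    complCDF U t - complCDF U s ∈ Icc 0 (t - s) := by
  rw [complCDF_sub hU hst]
  refine ⟨measureReal_nonneg, ?_⟩
  calc volume.real (Ioo 0 (1 / 2) \ U ∩ Ioc s t) ≤ volume.real (Ioc s t) :=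
        measureReal_mono inter_subset_right measure_Ioc_lt_top.ne
    _ = t - s := by rw [Real.volume_real_Ioc_of_le hst]

lemma lipschitzWith_complCDF (hU : IsOpen U) : LipschitzWith 1 (complCDF U) := by
  refine LipschitzWith.of_dist_le_mul fun t s => ?_
  rw [NNReal.coe_one, one_mul, Real.dist_eq, Real.dist_eq]
  rcases le_total s t with hst | hts
  · obtain ⟨h0, h1⟩ := complCDF_sub_mem_Icc hU hst
    rw [abs_of_nonneg h0, abs_of_nonneg (sub_nonneg.2 hst)]; exact h1
  · obtain ⟨h0, h1⟩ := complCDF_sub_mem_Icc hU hts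
    rw [abs_sub_comm, abs_of_nonneg h0, abs_sub_comm, abs_of_nonneg (sub_nonneg.2 hts)]; exact h1

lemma nowhereInjOn_complCDF (hU : IsOpen U) (hd : Dense U) : NowhereInjOn (complCDF U) univ := by
  intro a b hab _ hinj
  obtain ⟨x, hxU, hx⟩ := hd.exists_mem_open isOpen_Ioo (nonempty_Ioo.2 hab)
  obtain ⟨ε, hε, hball⟩ := Metric.isOpen_iff.1 (hU.inter isOpen_Ioo) x ⟨hxU, hx⟩
  have hsub : Ioc x (x + ε / 2) ⊆ ball x ε := fun y hy => by
    rw [Real.ball_eq_Ioo]; constructor <;> linarith [hy.1, hy.2]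
  have hmem : x + ε / 2 ∈ Ioo a b := (hball (hsub ⟨by linarith, le_rfl⟩)).2
  have heq : complCDF U (x + ε / 2) = complCDF U x := by
    have : Ioo 0 (1 / 2) \ U ∩ Ioc x (x + ε / 2) = ∅ :=
      eq_empty_of_forall_notMem fun y hy => hy.1.2 (hball (hsub hy.2)).1
    rw [← sub_eq_zero, complCDF_sub hU (by linarith), this, measureReal_empty]
  exact (by linarith : x + ε / 2 ≠ x) (hinj (Ioo_subset_Icc_self hmem) (Ioo_subset_Icc_self hx) heq)

lemma exists_mul_sub_le_complCDF_sub (hU : IsOpen U) (hvol : volume U < 1 / 2) {c : ℝ}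
    (hc : c < 1) : ∃ u v, 0 ≤ u ∧ u < v ∧ v ≤ 1 / 2 ∧
      c * (v - u) ≤ complCDF U v - complCDF U u := by
  set S := Ioo 0 (1 / 2) \ U
  have hSpos : volume S ≠ 0 := by
    refine (tsub_pos_of_lt ?_).trans_le le_measure_sdiff |>.ne'
    rwa [Real.volume_Ioo, sub_zero, ENNReal.ofReal_div_of_pos two_pos, ENNReal.ofReal_one,
      ENNReal.ofReal_ofNat]
  have : (ae (volume.restrict S)).NeBot := ae_neBot.2 (by rwa [Ne, Measure.restrict_eq_zero])
  obtain ⟨x, hx, hxS⟩ := ((Besicovitch.ae_tendsto_measure_inter_div volume S).and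
    (ae_restrict_mem (measurableSet_Ioo.diff hU.measurableSet))).exists
  have hdens := (ENNReal.tendsto_toReal ENNReal.one_ne_top).comp hx
  rw [ENNReal.toReal_one] at hdens
  obtain ⟨r, hcr, hr⟩ := ((hdens.eventually_const_lt hc).and
    (Ioo_mem_nhdsGT (lt_min hxS.1.1 (sub_pos.2 hxS.1.2)))).exists
  refine ⟨x - r, x + r, by linarith [hr.2.trans_le (min_le_left _ _)], by linarith [hr.1],
    by linarith [hr.2.trans_le (min_le_right _ _)], ?_⟩
  have hball : volume.real (S ∩ closedBall x r) = volume.real (S ∩ Ioc (x - r) (x + r)) := by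
    rw [Real.closedBall_eq_Icc]
    exact congrArg ENNReal.toReal (measure_congr ((ae_eq_refl S).inter Ioc_ae_eq_Icc).symm)
  simp only [Function.comp_apply, ENNReal.toReal_div, Real.volume_closedBall,
    ENNReal.toReal_ofReal (by linarith [hr.1] : (0:ℝ) ≤ 2 * r)] at hcr
  rw [complCDF_sub hU (by linarith [hr.1]), ← hball, show x + r - (x - r) = 2 * r by ring]
  exact ((lt_div_iff₀ (by linarith [hr.1])).1 hcr).le

end complCDF

structure IsNowhereInjectiveBump (φ : ℝ → ℝ) : Prop where
  lipschitzWith : LipschitzWith 1 φ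
  support_subset : Function.support φ ⊆ Ioo 0 1
  nowhereInjOn : NowhereInjOn φ univ
  exists_mul_sub_le : ∀ c < 1, ∃ u v, 0 ≤ u ∧ u < v ∧ v ≤ 1 ∧ c * (v - u) ≤ |φ v - φ u|

lemma exists_isNowhereInjectiveBump : ∃ φ, IsNowhereInjectiveBump φ := by
  obtain ⟨U, hU, hd, hvol⟩ := exists_isOpen_dense_volume_lt (ε := 1 / 2) (by norm_num)
  refine ⟨fun t => complCDF U (min t (1 - t)), ⟨?_, fun t ht => by_contra fun hIoo =>
    ht (complCDF_eq_zero ?_), ?_, ?_⟩⟩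
  · simpa [Function.comp_def] using (lipschitzWith_complCDF hU).comp
      (LipschitzWith.id.min ((LipschitzWith.const 1).sub LipschitzWith.id))
  · rw [mem_Ioo, not_and_or, not_lt, not_lt] at hIoo
    rcases hIoo with ht | ht
    · exact (min_le_left _ _).trans ht
    · exact (min_le_right _ _).trans (by linarith)
  · exact (nowhereInjOn_complCDF hU hd).comp
      (continuous_id.min (continuous_const.sub continuous_id)).continuousOn (mapsTo_univ _ _)
  · intro c hc
    obtain ⟨u, v, hu, huv, hv, h⟩ := exists_mul_sub_le_complCDF_sub hU hvol hc
    refine ⟨u, v, hu, huv, by linarith, ?_⟩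
    rw [min_eq_left (by linarith), min_eq_left (by linarith)]
    exact h.trans (le_abs_self _)

lemma abs_add_abs_le_of_eq_zero {f g : ℝ → ℝ} (hf : LipschitzWith 1 f) (hg : LipschitzWith 1 g)
    {s z t : ℝ} (hsz : s ≤ z) (hzt : z ≤ t) (hfz : f z = 0) (hgz : g z = 0) :
    |f t| + |g s| ≤ t - s := by
  have h₁ := hf.dist_le_mul t z
  have h₂ := hg.dist_le_mul z s
  rw [Real.dist_eq, Real.dist_eq, hfz, sub_zero, NNReal.coe_one, one_mul,
    abs_of_nonneg (sub_nonneg.2 hzt)] at h₁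
  rw [Real.dist_eq, Real.dist_eq, hgz, zero_sub, abs_neg, NNReal.coe_one, one_mul,
    abs_of_nonneg (sub_nonneg.2 hsz)] at h₂
  linarith

noncomputable def bumpScale (D : ℝ) (n : ℕ) : ℝ := D / 2 ^ (n + 1)

noncomputable def scaledBump (φ : ℝ → ℝ) (D : ℝ) (n : ℕ) (t : ℝ) : ℝ :=
  bumpScale D n * φ (t / bumpScale D n - 1)

noncomputable def bumpSeries (φ : ℝ → ℝ) (D : ℝ) (a : C₀(ℕ, ℝ)) (t : ℝ) : ℝ :=
  ∑' n, a n * scaledBump φ D n t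

section bumpSeries

variable {φ : ℝ → ℝ} {D s t : ℝ} {n m : ℕ}

lemma bumpScale_pos (hD : 0 < D) (n : ℕ) : 0 < bumpScale D n := by
  unfold bumpScale; positivity

lemma two_mul_bumpScale_le (hD : 0 < D) (hnm : n < m) : 2 * bumpScale D m ≤ bumpScale D n := by
  rw [bumpScale, bumpScale, pow_succ, ← div_div, mul_div_cancel₀ _ two_ne_zero]
  exact div_le_div_of_nonneg_left hD.le (by positivity) (pow_le_pow_right₀ one_le_two hnm)

lemma two_mul_bumpScale_le_self (hD : 0 < D) (n : ℕ) : 2 * bumpScale D n ≤ D := by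
  rw [bumpScale, pow_succ, ← div_div, mul_div_cancel₀ _ two_ne_zero]
  exact div_le_self hD.le (one_le_pow₀ one_le_two)

lemma notMem_Ioo_bumpScale (hD : 0 < D) (ht : t ∈ Icc (bumpScale D n) (2 * bumpScale D n))
    (hmn : m ≠ n) : t ∉ Ioo (bumpScale D m) (2 * bumpScale D m) := fun h => by
  rcases hmn.lt_or_gt with hlt | hlt
  · linarith [two_mul_bumpScale_le hD hlt, ht.2, h.1]
  · linarith [two_mul_bumpScale_le hD hlt, ht.1, h.2]

lemma scaledBump_eq_zero (hφ : Function.support φ ⊆ Ioo 0 1) (hD : 0 < D)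
    (ht : t ∉ Ioo (bumpScale D n) (2 * bumpScale D n)) : scaledBump φ D n t = 0 := by
  have hpos := bumpScale_pos hD n
  have hIoo : t / bumpScale D n - 1 ∉ Ioo 0 1 := by
    rintro ⟨h0, h1⟩
    rw [sub_pos, one_lt_div hpos] at h0
    rw [sub_lt_iff_lt_add, one_add_one_eq_two, div_lt_iff₀ hpos] at h1
    exact ht ⟨h0, by linarith⟩
  rw [scaledBump, Function.notMem_support.1 fun h => hIoo (hφ h), mul_zero]

lemma scaledBump_eq_zero_of_ne (hφ : Function.support φ ⊆ Ioo 0 1) (hD : 0 < D)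
    (ht : t ∈ Icc (bumpScale D n) (2 * bumpScale D n)) (hmn : m ≠ n) : scaledBump φ D m t = 0 :=
  scaledBump_eq_zero hφ hD (notMem_Ioo_bumpScale hD ht hmn)

lemma lipschitzWith_scaledBump (hφ : LipschitzWith 1 φ) (hD : 0 < D) (n : ℕ) :
    LipschitzWith 1 (scaledBump φ D n) := by
  have hpos := bumpScale_pos hD n
  refine LipschitzWith.of_dist_le_mul fun t s => ?_
  have := hφ.dist_le_mul (t / bumpScale D n - 1) (s / bumpScale D n - 1)
  rw [Real.dist_eq, Real.dist_eq, NNReal.coe_one, one_mul, sub_sub_sub_cancel_right, ← sub_div,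
    abs_div, abs_of_pos hpos, le_div_iff₀ hpos] at this
  rw [Real.dist_eq, Real.dist_eq, NNReal.coe_one, one_mul, scaledBump, scaledBump, ← mul_sub,
    abs_mul, abs_of_pos hpos]
  linarith

lemma nowhereInjOn_scaledBump (hφ : NowhereInjOn φ univ) (D : ℝ) (n : ℕ) :
    NowhereInjOn (scaledBump φ D n) univ :=
  (hφ.comp ((continuous_id.div_const _).sub continuous_const).continuousOn
    (mapsTo_univ _ _)).comp_left (bumpScale D n * ·)

lemma bumpSeries_eq (a : C₀(ℕ, ℝ)) (h : ∀ m ≠ n, scaledBump φ D m t = 0) :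
    bumpSeries φ D a t = a n * scaledBump φ D n t :=
  tsum_eq_single n fun m hm => by rw [h m hm, mul_zero]

lemma exists_forall_ne_scaledBump_eq_zero (hφ : Function.support φ ⊆ Ioo 0 1) (hD : 0 < D)
    (t : ℝ) : ∃ n, ∀ m ≠ n, scaledBump φ D m t = 0 := by
  by_cases h : ∃ n, t ∈ Ioo (bumpScale D n) (2 * bumpScale D n)
  · obtain ⟨n, hn⟩ := h
    exact ⟨n, fun m hm => scaledBump_eq_zero_of_ne hφ hD (Ioo_subset_Icc_self hn) hm⟩
  · rw [not_exists] at h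
    exact ⟨0, fun m _ => scaledBump_eq_zero hφ hD (h m)⟩

lemma bumpSeries_add (hφ : Function.support φ ⊆ Ioo 0 1) (hD : 0 < D) (a b : C₀(ℕ, ℝ))
    (t : ℝ) : bumpSeries φ D (a + b) t = bumpSeries φ D a t + bumpSeries φ D b t := by
  obtain ⟨n, hn⟩ := exists_forall_ne_scaledBump_eq_zero hφ hD t
  simp only [bumpSeries_eq _ hn, ZeroAtInftyContinuousMap.add_apply, add_mul]

lemma bumpSeries_smul (hφ : Function.support φ ⊆ Ioo 0 1) (hD : 0 < D) (c : ℝ) (a : C₀(ℕ, ℝ))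
    (t : ℝ) : bumpSeries φ D (c • a) t = c * bumpSeries φ D a t := by
  obtain ⟨n, hn⟩ := exists_forall_ne_scaledBump_eq_zero hφ hD t
  simp only [bumpSeries_eq _ hn, ZeroAtInftyContinuousMap.smul_apply, smul_eq_mul, mul_assoc]

lemma bumpSeries_apply_zero (hφ : Function.support φ ⊆ Ioo 0 1) (hD : 0 < D)
    (a : C₀(ℕ, ℝ)) : bumpSeries φ D a 0 = 0 := by
  have h (m : ℕ) : scaledBump φ D m 0 = 0 :=
    scaledBump_eq_zero hφ hD fun h => (bumpScale_pos hD m).not_gt h.1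
  rw [bumpSeries_eq a (n := 0) fun m _ => h m, h, mul_zero]

lemma exists_scaledBump_eq_zero_between (hφ : Function.support φ ⊆ Ioo 0 1) (hD : 0 < D)
    (hst : s ≤ t) (hn : ∀ k ≠ n, scaledBump φ D k t = 0) (hm : ∀ k ≠ m, scaledBump φ D k s = 0)
    (hnm : n ≠ m) :
    ∃ z, s ≤ z ∧ z ≤ t ∧ scaledBump φ D n z = 0 ∧ scaledBump φ D m z = 0 := by
  by_cases ht : t ∈ Ioo (bumpScale D n) (2 * bumpScale D n)
  · by_cases hs : s ∈ Ioo (bumpScale D m) (2 * bumpScale D m)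
    · have hleft : bumpScale D n ∈ Icc (bumpScale D n) (2 * bumpScale D n) :=
        ⟨le_rfl, by linarith [bumpScale_pos hD n]⟩
      refine ⟨bumpScale D n, ?_, ht.1.le, scaledBump_eq_zero hφ hD fun h => h.1.false,
        scaledBump_eq_zero_of_ne hφ hD hleft hnm.symm⟩
      by_contra! hlt
      exact notMem_Ioo_bumpScale hD ⟨hlt.le, by linarith [ht.2]⟩ hnm.symm hs
    · exact ⟨s, le_rfl, hst, hm n hnm, scaledBump_eq_zero hφ hD hs⟩
  · exact ⟨t, hst, le_rfl, scaledBump_eq_zero hφ hD ht, hn m hnm.symm⟩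

lemma abs_bumpSeries_sub_le (hφ : LipschitzWith 1 φ) (hφ0 : Function.support φ ⊆ Ioo 0 1)
    (hD : 0 < D) (a : C₀(ℕ, ℝ)) (hst : s ≤ t) :
    |bumpSeries φ D a t - bumpSeries φ D a s| ≤ ‖a‖ * (t - s) := by
  have ha (k : ℕ) : |a k| ≤ ‖a‖ := a.toBCF.norm_coe_le_norm k
  obtain ⟨n, hn⟩ := exists_forall_ne_scaledBump_eq_zero hφ0 hD t
  obtain ⟨m, hm⟩ := exists_forall_ne_scaledBump_eq_zero hφ0 hD s
  rw [bumpSeries_eq a hn, bumpSeries_eq a hm]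
  rcases eq_or_ne n m with rfl | hnm
  · have := (lipschitzWith_scaledBump hφ hD n).dist_le_mul t s
    rw [Real.dist_eq, Real.dist_eq, NNReal.coe_one, one_mul, abs_of_nonneg (sub_nonneg.2 hst)]
      at this
    rw [← mul_sub, abs_mul]
    exact mul_le_mul (ha n) this (abs_nonneg _) (norm_nonneg a)
  · obtain ⟨z, hsz, hzt, hnz, hmz⟩ := exists_scaledBump_eq_zero_between hφ0 hD hst hn hm hnm
    calc |a n * scaledBump φ D n t - a m * scaledBump φ D m s|
        ≤ |a n| * |scaledBump φ D n t| + |a m| * |scaledBump φ D m s| := by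
          rw [← abs_mul, ← abs_mul]; exact abs_sub _ _
      _ ≤ ‖a‖ * (|scaledBump φ D n t| + |scaledBump φ D m s|) := by
          rw [mul_add]; gcongr <;> exact ha _
      _ ≤ ‖a‖ * (t - s) := by
          gcongr
          exact abs_add_abs_le_of_eq_zero (lipschitzWith_scaledBump hφ hD n)
            (lipschitzWith_scaledBump hφ hD m) hsz hzt hnz hmz

lemma lipschitzWith_bumpSeries (hφ : LipschitzWith 1 φ) (hφ0 : Function.support φ ⊆ Ioo 0 1)
    (hD : 0 < D) (a : C₀(ℕ, ℝ)) :
    LipschitzWith ‖a‖₊ (bumpSeries φ D a) := by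
  refine LipschitzWith.of_dist_le_mul fun t s => ?_
  rw [Real.dist_eq, Real.dist_eq, coe_nnnorm]
  rcases le_total s t with hst | hts
  · rw [abs_of_nonneg (sub_nonneg.2 hst)]; exact abs_bumpSeries_sub_le hφ hφ0 hD a hst
  · rw [abs_sub_comm, abs_sub_comm t, abs_of_nonneg (sub_nonneg.2 hts)]
    exact abs_bumpSeries_sub_le hφ hφ0 hD a hts

lemma exists_bumpScale_lt_forall_Icc_scaledBump_eq_zero (hφ : Function.support φ ⊆ Ioo 0 1)
    (hD : 0 < D) {b : ℝ} (hb : 0 < b) : ∃ n, bumpScale D n < b ∧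
      ∀ t ∈ Icc (bumpScale D n) b, ∀ m ≠ n, scaledBump φ D m t = 0 := by
  rcases le_or_gt b D with hbD | hbD
  · obtain ⟨n, hlt, hle⟩ := exists_nat_pow_near_of_lt_one (div_pos hb hD)
      ((div_le_one hD).2 hbD) (by norm_num : (0 : ℝ) < 1 / 2) (by norm_num)
    have hscale : bumpScale D n = D * (1 / 2) ^ (n + 1) := by
      rw [bumpScale, one_div, inv_pow, div_eq_mul_inv]
    rw [lt_div_iff₀ hD, mul_comm] at hlt
    rw [div_le_iff₀ hD] at hle
    refine ⟨n, hscale ▸ hlt, fun t ht m hm => scaledBump_eq_zero_of_ne hφ hD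
      ⟨ht.1, ht.2.trans ?_⟩ hm⟩
    rw [hscale, pow_succ]; linarith
  · refine ⟨0, by linarith [two_mul_bumpScale_le_self hD 0, bumpScale_pos hD 0],
      fun t ht m hm => scaledBump_eq_zero hφ hD fun h => ?_⟩
    linarith [two_mul_bumpScale_le hD (Nat.pos_of_ne_zero hm), h.2, ht.1]

lemma nowhereInjOn_bumpSeries (hφ : NowhereInjOn φ univ) (hφ0 : Function.support φ ⊆ Ioo 0 1)
    (hD : 0 < D) (a : C₀(ℕ, ℝ)) :
    NowhereInjOn (bumpSeries φ D a) (Ici 0) := by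
  intro s t hst hsub hinj
  obtain ⟨n, hn, hzero⟩ :=
    exists_bumpScale_lt_forall_Icc_scaledBump_eq_zero hφ0 hD
      ((hsub (left_mem_Icc.2 hst.le)).out.trans_lt hst)
  refine (nowhereInjOn_scaledBump hφ D n).comp_left (a n * ·) _ _ (max_lt hst hn)
    (subset_univ _) ((hinj.mono (Icc_subset_Icc_left (le_max_left _ _))).congr fun x hx => ?_)
  exact bumpSeries_eq a (hzero x ⟨(le_max_right _ _).trans hx.1, hx.2⟩)

lemma exists_mul_sub_le_abs_bumpSeries_sub (hφ : IsNowhereInjectiveBump φ) (hD : 0 < D)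
    (a : C₀(ℕ, ℝ)) (n : ℕ) {c : ℝ} (hc : c < 1) : ∃ s t, 0 ≤ s ∧ s < t ∧ t ≤ D ∧
      c * |a n| * (t - s) ≤ |bumpSeries φ D a t - bumpSeries φ D a s| := by
  obtain ⟨u, v, hu, huv, hv, hslope⟩ := hφ.exists_mul_sub_le c hc
  set h := bumpScale D n
  have hpos : 0 < h := bumpScale_pos hD n
  have hmem {x : ℝ} (hx0 : 0 ≤ x) (hx1 : x ≤ 1) : h * (1 + x) ∈ Icc h (2 * h) :=
    ⟨by nlinarith, by nlinarith⟩
  have hval {x : ℝ} (hx0 : 0 ≤ x) (hx1 : x ≤ 1) :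
      bumpSeries φ D a (h * (1 + x)) = a n * (h * φ x) := by
    rw [bumpSeries_eq a fun m hm =>
      scaledBump_eq_zero_of_ne hφ.support_subset hD (hmem hx0 hx1) hm, scaledBump,
      mul_div_cancel_left₀ _ hpos.ne', add_sub_cancel_left]
  refine ⟨h * (1 + u), h * (1 + v), by nlinarith, by nlinarith, ?_, ?_⟩
  · exact (hmem (hu.trans huv.le) hv).2.trans (two_mul_bumpScale_le_self hD n)
  · rw [hval (hu.trans huv.le) hv, hval hu (huv.trans_le hv).le]
    calc c * |a n| * (h * (1 + v) - h * (1 + u)) = |a n| * h * (c * (v - u)) := by ring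
      _ ≤ |a n| * h * |φ v - φ u| := by gcongr
      _ = |a n * (h * φ v) - a n * (h * φ u)| := by
          rw [← mul_sub, ← mul_sub, abs_mul, abs_mul, abs_of_pos hpos, mul_assoc]

end bumpSeries

lemma Real.le_of_forall_lt_one_mul_le {x y : ℝ} (h : ∀ c < 1, c * x ≤ y) : x ≤ y := by
  have : Tendsto (fun c : ℝ => c * x) (𝓝[<] 1) (𝓝 x) := by
    simpa using ((continuous_mul_const x).tendsto 1).mono_left nhdsWithin_le_nhds
  exact le_of_tendsto this (eventually_nhdsWithin_of_forall h)

section lipNorm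

variable {M : Type*} [MetricSpace M] {f g : M → ℝ} {K K' : ℝ≥0}

lemma lipNorm_nonneg (f : M → ℝ) : 0 ≤ lipNorm f :=
  Real.sSup_nonneg fun _ ⟨_, _, _, hr⟩ => hr ▸ div_nonneg (abs_nonneg _) dist_nonneg

lemma lipNorm_le {C : ℝ} (hC : 0 ≤ C) (h : ∀ p q, |f p - f q| ≤ C * dist p q) :
    lipNorm f ≤ C :=
  Real.sSup_le (fun _ ⟨p, q, hpq, hr⟩ => hr ▸ (div_le_iff₀ (dist_pos.2 hpq)).2 (h p q)) hC

lemma LipschitzWith.abs_sub_le_mul (hf : LipschitzWith K f) (p q : M) :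
    |f p - f q| ≤ K * dist p q := by
  simpa only [Real.dist_eq] using hf.dist_le_mul p q

lemma LipschitzWith.lipNorm_le (hf : LipschitzWith K f) : lipNorm f ≤ K :=
  _root_.lipNorm_le K.2 hf.abs_sub_le_mul

lemma LipschitzWith.le_lipNorm (hf : LipschitzWith K f) {p q : M} (hpq : p ≠ q) {C : ℝ}
    (h : C * dist p q ≤ |f p - f q|) : C ≤ lipNorm f :=
  ((le_div_iff₀ (dist_pos.2 hpq)).2 h).trans <| le_csSup
    ⟨K, fun _ ⟨p, q, hpq, hr⟩ => hr ▸ (div_le_iff₀ (dist_pos.2 hpq)).2 (hf.abs_sub_le_mul p q)⟩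
    ⟨p, q, hpq, rfl⟩

lemma LipschitzWith.abs_sub_le_lipNorm_mul (hf : LipschitzWith K f) (p q : M) :
    |f p - f q| ≤ lipNorm f * dist p q := by
  rcases eq_or_ne p q with rfl | hpq
  · simp
  · have hd := dist_pos.2 hpq
    exact (div_le_iff₀ hd).1 (hf.le_lipNorm hpq (div_mul_cancel₀ _ hd.ne').le)

lemma lipNorm_le_lipNorm_sub_add (hf : LipschitzWith K f) (hg : LipschitzWith K' g) :
    lipNorm f ≤ lipNorm (fun x => f x - g x) + lipNorm g :=
  lipNorm_le (add_nonneg (lipNorm_nonneg _) (lipNorm_nonneg _)) fun p q =>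
    calc |f p - f q| = |((f p - g p) - (f q - g q)) + (g p - g q)| := by ring_nf
      _ ≤ |(f p - g p) - (f q - g q)| + |g p - g q| := abs_add_le _ _
      _ ≤ _ := by
        rw [add_mul]
        exact add_le_add ((hf.sub hg).abs_sub_le_lipNorm_mul p q) (hg.abs_sub_le_lipNorm_mul p q)

lemma LipschitzWith.abs_sub_eq_lipNorm_mul_of_isometry (hg : LipschitzWith K g) {γ : ℝ → M}
    {d : ℝ} (hγ : ∀ s ∈ Icc 0 d, ∀ t ∈ Icc 0 d, dist (γ s) (γ t) = |s - t|)
    (hatt : |g (γ 0) - g (γ d)| = lipNorm g * d) {s t : ℝ} (hs : s ∈ Icc 0 d) (ht : t ∈ Icc 0 d) :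
    |g (γ s) - g (γ t)| = lipNorm g * |s - t| := by
  wlog hst : s ≤ t generalizing s t
  · rw [abs_sub_comm, abs_sub_comm s]; exact this ht hs (le_of_not_ge hst)
  have hbound {x y : ℝ} (hx : x ∈ Icc 0 d) (hy : y ∈ Icc 0 d) :
      |g (γ x) - g (γ y)| ≤ lipNorm g * |x - y| :=
    hγ x hx y hy ▸ hg.abs_sub_le_lipNorm_mul _ _
  have h0 : (0 : ℝ) ∈ Icc 0 d := ⟨le_rfl, hs.1.trans hs.2⟩
  have hd : d ∈ Icc 0 d := ⟨hs.1.trans hs.2, le_rfl⟩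
  have h₁ : |g (γ 0) - g (γ s)| ≤ lipNorm g * s := by
    simpa [abs_of_nonneg hs.1] using hbound h0 hs
  have h₂ : |g (γ t) - g (γ d)| ≤ lipNorm g * (d - t) := by
    simpa [abs_sub_comm t, abs_of_nonneg (sub_nonneg.2 ht.2)] using hbound ht hd
  have h₃ := hbound hs ht
  rw [abs_sub_comm s, abs_of_nonneg (sub_nonneg.2 hst)] at h₃ ⊢
  refine le_antisymm h₃ ?_
  have := abs_sub_le (g (γ 0)) (g (γ s)) (g (γ d))
  have := abs_sub_le (g (γ s)) (g (γ t)) (g (γ d))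
  linarith

lemma lipNorm_le_two_mul_lipNorm_sub (hM : MetricallyConvex M) (hf : LipschitzWith K f)
    (hf_seg : ∀ (γ : ℝ → M) (d : ℝ), 0 < d →
      (∀ s ∈ Icc 0 d, ∀ t ∈ Icc 0 d, dist (γ s) (γ t) = |s - t|) → ¬ InjOn (f ∘ γ) (Icc 0 d))
    (hg : LipschitzWith K' g) (hsna : StronglyAttains g) :
    lipNorm f ≤ 2 * lipNorm (fun x => f x - g x) := by
  obtain ⟨p, q, hpq, hatt⟩ := hsna
  obtain ⟨γ, hγ0, hγd, hγ⟩ := hM p q hpq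
  have hflat := hf_seg γ _ (dist_pos.2 hpq) hγ
  simp only [InjOn, not_forall, Function.comp_apply] at hflat
  obtain ⟨s, hs, t, ht, hfst, hst⟩ := hflat
  have hseg := hg.abs_sub_eq_lipNorm_mul_of_isometry hγ (by rwa [hγ0, hγd]) hs ht
  have hgle : lipNorm g ≤ lipNorm (fun x => f x - g x) := by
    refine (hf.sub hg).le_lipNorm (p := γ s) (q := γ t) ?_ ?_
    · rw [← dist_pos, hγ s hs t ht]; exact abs_pos.2 (sub_ne_zero.2 hst)
    · rw [hγ s hs t ht, hfst, sub_sub_sub_cancel_left, abs_sub_comm (g (γ t)), hseg]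
  linarith [lipNorm_le_lipNorm_sub_add hf hg]

variable {φ : ℝ → ℝ} {base : M}

lemma not_injOn_bumpSeries_comp_dist (hφ : NowhereInjOn φ univ)
    (hφ0 : Function.support φ ⊆ Ioo 0 1) {D : ℝ} (hD : 0 < D) (a : C₀(ℕ, ℝ)) {γ : ℝ → M} {d : ℝ}
    (hd : 0 < d) (hγ : ∀ s ∈ Icc 0 d, ∀ t ∈ Icc 0 d, dist (γ s) (γ t) = |s - t|) :
    ¬ InjOn ((fun x => bumpSeries φ D a (dist x base)) ∘ γ) (Icc 0 d) := by
  have hγL : LipschitzOnWith 1 γ (Icc 0 d) :=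
    LipschitzOnWith.of_dist_le_mul fun s hs t ht => by
      rw [hγ s hs t ht, NNReal.coe_one, one_mul, Real.dist_eq]
  exact (nowhereInjOn_bumpSeries hφ hφ0 hD a).comp
    ((LipschitzWith.dist_left base).comp_lipschitzOnWith hγL).continuousOn
    (fun _ _ => dist_nonneg) 0 d hd subset_rfl

lemma lipschitzWith_bumpSeries_comp_dist (hφ : LipschitzWith 1 φ)
    (hφ0 : Function.support φ ⊆ Ioo 0 1) {D : ℝ} (hD : 0 < D) (a : C₀(ℕ, ℝ)) (base : M) :
    LipschitzWith ‖a‖₊ (fun x => bumpSeries φ D a (dist x base)) := by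
  simpa [Function.comp_def] using
    (lipschitzWith_bumpSeries hφ hφ0 hD a).comp (LipschitzWith.dist_left base)

lemma lipNorm_bumpSeries_comp_dist (hM : MetricallyConvex M) (hφ : IsNowhereInjectiveBump φ)
    {y : M} (hy : y ≠ base) (a : C₀(ℕ, ℝ)) :
    lipNorm (fun x => bumpSeries φ (dist base y) a (dist x base)) = ‖a‖ := by
  set D := dist base y
  have hD : 0 < D := dist_pos.2 hy.symm
  have hlip := lipschitzWith_bumpSeries_comp_dist hφ.lipschitzWith hφ.support_subset hD a base
  refine le_antisymm hlip.lipNorm_le ?_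
  obtain ⟨γ, hγ0, -, hγ⟩ := hM base y hy.symm
  have hdist {t : ℝ} (ht : t ∈ Icc 0 D) : dist (γ t) base = t := by
    rw [← hγ0, hγ t ht 0 ⟨le_rfl, hD.le⟩, sub_zero, abs_of_nonneg ht.1]
  rw [← ZeroAtInftyContinuousMap.norm_toBCF_eq_norm,
    BoundedContinuousFunction.norm_le (lipNorm_nonneg _)]
  refine fun n => Real.le_of_forall_lt_one_mul_le fun c hc => ?_
  obtain ⟨s, t, hs, hst, ht, hslope⟩ := exists_mul_sub_le_abs_bumpSeries_sub hφ hD a n hc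
  have hsD : s ∈ Icc 0 D := ⟨hs, hst.le.trans ht⟩
  have htD : t ∈ Icc 0 D := ⟨hs.trans hst.le, ht⟩
  refine hlip.le_lipNorm (p := γ t) (q := γ s) ?_ ?_
  · rw [← dist_pos, hγ t htD s hsD, abs_of_pos (sub_pos.2 hst)]; exact sub_pos.2 hst
  · rwa [hdist htD, hdist hsD, hγ t htD s hsD, abs_of_pos (sub_pos.2 hst)]

end lipNorm

/-- For a metrically convex metric space `M` (with at least two points), the set
`(Lip₀(M) \ closure(SNA(M))) ∪ {0}` contains an isometric copy of `c₀`. -/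
theorem c0_outside_closure_SNA_metrically_convex {M : Type*} [MetricSpace M]
    [Nontrivial M] (base : M) (hM : MetricallyConvex M) :
    ∃ T : C₀(ℕ, ℝ) →ₗ[ℝ] (M → ℝ),
      ∀ a : C₀(ℕ, ℝ),
        MemLip0 base (T a) ∧ lipNorm (T a) = ‖a‖ ∧
        (a ≠ 0 → ∃ c : ℝ, 0 < c ∧ ∀ g : M → ℝ, MemLip0 base g → StronglyAttains g →
          c ≤ lipNorm (fun x => T a x - g x)) := by
  obtain ⟨φ, hφ⟩ := exists_isNowhereInjectiveBump
  obtain ⟨y, hy⟩ := exists_ne base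
  have hD : 0 < dist base y := dist_pos.2 hy.symm
  let T : C₀(ℕ, ℝ) →ₗ[ℝ] (M → ℝ) :=
    { toFun := fun a x => bumpSeries φ (dist base y) a (dist x base)
      map_add' := fun a b => funext fun x => bumpSeries_add hφ.support_subset hD a b _
      map_smul' := fun c a => funext fun x => bumpSeries_smul hφ.support_subset hD c a _ }
  refine ⟨T, fun a => ?_⟩
  have hlip : LipschitzWith ‖a‖₊ (T a) :=
    lipschitzWith_bumpSeries_comp_dist hφ.lipschitzWith hφ.support_subset hD a base
  have hnorm : lipNorm (T a) = ‖a‖ := lipNorm_bumpSeries_comp_dist hM hφ hy a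
  refine ⟨⟨by simp [T, bumpSeries_apply_zero hφ.support_subset hD], _, hlip⟩, hnorm,
    fun ha => ⟨‖a‖ / 2, half_pos (norm_pos_iff.2 ha), fun g ⟨_, _, hg⟩ hsna => ?_⟩⟩
  have := lipNorm_le_two_mul_lipNorm_sub hM hlip (fun γ d hd hγ =>
    not_injOn_bumpSeries_comp_dist hφ.nowhereInjOn hφ.support_subset hD a hd hγ) hg hsna
  linarith
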